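/- Define H : ℝ² → ℝ by H(a, b) = (1/2)·∫₀^{π/2} (max((√3/2)(a·cos φ + b·sin φ), 0))² · cos φ dφ. Then for all real numbers ṡ and ν̇ with ν̇ < 0, the supremum over (a, b) ∈ ℝ² of (a·ṡ + b·ν̇ − H(a, b)) is +∞; that is, the Legendre–Fenchel transform of H is not bounded above at any point with negative second coordinate. -/

import Mathlib

open Real

/-- The Hamiltonian of the convexity-constrained Euler–Mumford elastica model
(with `β = 1`) in reduced coordinates. -/
noncomputable def convexElasticaH (a b : ℝ) : ℝ :=
  (1/2) * ∫ x in (0:ℝ)..(π/2),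
    (max ((Real.sqrt 3 / 2) * (a * Real.cos x + b * Real.sin x)) 0)^2
      * Real.cos x

lemma convexElasticaH_zero_of_nonpos (b : ℝ) (hb : b ≤ 0) :
    convexElasticaH 0 b = 0 := by
  unfold convexElasticaH
  have h : ∫ x in (0:ℝ)..(π/2),
      (max ((Real.sqrt 3 / 2) * (0 * Real.cos x + b * Real.sin x)) 0)^2
        * Real.cos x = ∫ x in (0:ℝ)..(π/2), (0:ℝ) := by
    apply intervalIntegral.integral_congr
    intro x hx
    rw [Set.uIcc_of_le (by positivity : (0:ℝ) ≤ π/2)] at hx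
    have hs : 0 ≤ Real.sin x := Real.sin_nonneg_of_nonneg_of_le_pi hx.1
      (le_trans hx.2 (by linarith [Real.pi_pos]))
    have : (Real.sqrt 3 / 2) * (0 * Real.cos x + b * Real.sin x) ≤ 0 := by
      have : b * Real.sin x ≤ 0 := mul_nonpos_of_nonpos_of_nonneg hb hs
      nlinarith [Real.sqrt_nonneg 3]
    simp only [max_eq_right this]; ring
  rw [h]
  simp

/-- If `ν̇ < 0`, the Legendre–Fenchel transform of the convexity-constrained
elastica Hamiltonian at `(ṡ, ν̇)` is `+∞`: the set of values
`a·ṡ + b·ν̇ − H(a,b)` is not bounded above. -/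
theorem stmt_15 (s v : ℝ) (hv : v < 0) :
    ¬ BddAbove {w : ℝ | ∃ a b : ℝ, w = a * s + b * v - convexElasticaH a b} := by
  rintro ⟨M, hM⟩
  set t : ℝ := (|M| + 1) / (-v) with ht
  have hvpos : 0 < -v := by linarith
  have htpos : 0 < t := div_pos (by positivity) hvpos
  have hmem : (-t) * v ∈ {w : ℝ | ∃ a b : ℝ, w = a * s + b * v - convexElasticaH a b} := by
    refine ⟨0, -t, ?_⟩
    rw [convexElasticaH_zero_of_nonpos (-t) (by linarith)]
    ring
  have hle := hM hmem
  have hne : -v ≠ 0 := ne_of_gt hvpos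
  have : (-t) * v = |M| + 1 := by
    rw [ht]; field_simp; ring_nf; exact mul_inv_cancel₀ hv.ne
  rw [this] at hle
  have := abs_nonneg M
  have := le_abs_self M
  linarith
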